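/- Let ψ, θ be C¹ on the closure of Ω and vanish on ∂Ω, let f₁, f₂ be continuous on the closure of Ω, and let R_a > 0, L, A ≥ 0, and C ∈ (0,1] be constants such that ‖ψ‖₂ ≤ C·‖∇ψ‖₂, ‖θ‖₂ ≤ C·‖∇θ‖₂, ‖∂ₓθ‖₄ ≤ L, ‖∂_yθ‖₄ ≤ L, and ‖θ‖₄ ≤ A·‖∇θ‖₂. Then ‖∇ψ‖₂² + ‖∇θ‖₂² − R_a·∫_Ω (∂ₓθ)·ψ + ∫_Ω J(ψ,θ)·θ − ∫_Ω (f₁·ψ + f₂·θ) ≥ (1/2 − C·R_a/2 − A·L)·‖∇ψ‖₂² + (1/2 − R_a/2 − A·L)·‖∇θ‖₂² − (C²/2)·(‖f₁‖₂² + ‖f₂‖₂²). -/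

import Mathlib

open MeasureTheory Real Set Filter

noncomputable section

/-- The open unit square Ω = (0,1) × (0,1) in ℝ². -/
def Omg : Set (ℝ × ℝ) := Ioo (0:ℝ) 1 ×ˢ Ioo (0:ℝ) 1

/-- Partial derivative in the x-direction. -/
def px (f : ℝ × ℝ → ℝ) (p : ℝ × ℝ) : ℝ := fderiv ℝ f p (1, 0)

/-- Partial derivative in the y-direction. -/
def py (f : ℝ × ℝ → ℝ) (p : ℝ × ℝ) : ℝ := fderiv ℝ f p (0, 1)

/-- Laplacian. -/
def lap (f : ℝ × ℝ → ℝ) (p : ℝ × ℝ) : ℝ := px (px f) p + py (py f) p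

/-- Jacobian determinant J(ψ,θ) = ∂ₓψ·∂_yθ − ∂_yψ·∂ₓθ. -/
def Jac (ψ θ : ℝ × ℝ → ℝ) (p : ℝ × ℝ) : ℝ := px ψ p * py θ p - py ψ p * px θ p

/-- The L^q norm over Ω: ‖f‖_q = (∫_Ω |f|^q)^(1/q). -/
def Lnorm (f : ℝ × ℝ → ℝ) (q : ℝ) : ℝ := (∫ p in Omg, |f p| ^ q) ^ (1 / q)

/-- ‖∇f‖₂ = (∫_Ω (|∂ₓf|² + |∂_yf|²))^(1/2). -/
def gradNorm (f : ℝ × ℝ → ℝ) : ℝ :=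
  (∫ p in Omg, (|px f p| ^ 2 + |py f p| ^ 2)) ^ ((1:ℝ) / 2)

/-
Cauchy–Schwarz and the Poincaré inequality bound the buoyancy term by `C ‖∇ψ‖₂ ‖∇θ‖₂` and the
forcing term by `C (‖f₁‖₂ ‖∇ψ‖₂ + ‖f₂‖₂ ‖∇θ‖₂)`. Hölder's inequality with exponents `(2, 4, 4)`,
together with `‖∂ₓθ‖₄, ‖∂_yθ‖₄ ≤ L` and `‖θ‖₄ ≤ A ‖∇θ‖₂`, bounds the Jacobian term by
`2 A L ‖∇ψ‖₂ ‖∇θ‖₂`. Young's inequality `xy ≤ (x² + y²)/2` on each of these products gives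
the estimate.
-/

open scoped ENNReal

theorem isOpen_Omg : IsOpen Omg := isOpen_Ioo.prod isOpen_Ioo

theorem closure_Omg : closure Omg = Icc (0:ℝ) 1 ×ˢ Icc (0:ℝ) 1 := by
  rw [Omg, closure_prod_eq, closure_Ioo zero_ne_one]

theorem isCompact_closure_Omg : IsCompact (closure Omg) := by
  rw [closure_Omg]
  exact isCompact_Icc.prod isCompact_Icc

theorem uniqueDiffOn_closure_Omg : UniqueDiffOn ℝ (closure Omg) := by
  rw [closure_Omg]
  exact (uniqueDiffOn_Icc one_pos).prod (uniqueDiffOn_Icc one_pos)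

instance : IsFiniteMeasure (volume.restrict Omg) :=
  isFiniteMeasure_restrict.mpr
    ((measure_mono subset_closure).trans_lt isCompact_closure_Omg.measure_lt_top).ne

theorem ContinuousOn.memLp_top_restrict {α E : Type*} [TopologicalSpace α] [MeasurableSpace α]
    [OpensMeasurableSpace α] [NormedAddCommGroup E] [SecondCountableTopologyEither α E]
    {μ : Measure α} {s : Set α} {g : α → E} (hg : ContinuousOn g (closure s))
    (hs : MeasurableSet s) (hsc : IsCompact (closure s)) : MemLp g ∞ (μ.restrict s) := by
  obtain ⟨M, hM⟩ := hsc.exists_bound_of_continuousOn hg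
  exact memLp_top_of_bound ((hg.mono subset_closure).aestronglyMeasurable hs) M
    (ae_restrict_of_forall_mem hs fun x hx => hM x (subset_closure hx))

theorem ContDiffOn.memLp_top_fderiv_apply {E : Type*} [NormedAddCommGroup E] [NormedSpace ℝ E]
    [MeasurableSpace E] [OpensMeasurableSpace E] {μ : Measure E} {U : Set E} {f : E → ℝ}
    (hf : ContDiffOn ℝ 1 f (closure U)) (hU : IsOpen U) (hUc : IsCompact (closure U))
    (hUd : UniqueDiffOn ℝ (closure U)) (v : E) :
    MemLp (fun p => fderiv ℝ f p v) ∞ (μ.restrict U) := by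
  have hcont : ContinuousOn (fun p => fderivWithin ℝ f (closure U) p v) (closure U) :=
    (hf.continuousOn_fderivWithin hUd le_rfl).clm_apply continuousOn_const
  refine (hcont.memLp_top_restrict hU.measurableSet hUc).ae_eq ?_
  refine ae_restrict_of_forall_mem hU.measurableSet fun p hp => ?_
  dsimp only
  rw [fderivWithin_of_mem_nhds (mem_of_superset (hU.mem_nhds hp) subset_closure)]

theorem memLp_of_continuousOn_closure_Omg {u : ℝ × ℝ → ℝ} (hu : ContinuousOn u (closure Omg))
    (q : ℝ≥0∞) : MemLp u q (volume.restrict Omg) :=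
  (hu.memLp_top_restrict isOpen_Omg.measurableSet isCompact_closure_Omg).mono_exponent le_top

theorem memLp_px {f : ℝ × ℝ → ℝ} (hf : ContDiffOn ℝ 1 f (closure Omg)) (q : ℝ≥0∞) :
    MemLp (px f) q (volume.restrict Omg) :=
  (hf.memLp_top_fderiv_apply isOpen_Omg isCompact_closure_Omg uniqueDiffOn_closure_Omg
    (1, 0)).mono_exponent le_top

theorem memLp_py {f : ℝ × ℝ → ℝ} (hf : ContDiffOn ℝ 1 f (closure Omg)) (q : ℝ≥0∞) :
    MemLp (py f) q (volume.restrict Omg) :=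
  (hf.memLp_top_fderiv_apply isOpen_Omg isCompact_closure_Omg uniqueDiffOn_closure_Omg
    (0, 1)).mono_exponent le_top

theorem Lnorm_nonneg (u : ℝ × ℝ → ℝ) (q : ℝ) : 0 ≤ Lnorm u q :=
  rpow_nonneg (integral_nonneg fun _ => rpow_nonneg (abs_nonneg _) q) _

theorem Lnorm_two (u : ℝ × ℝ → ℝ) : Lnorm u 2 = √(∫ p in Omg, u p ^ 2) := by
  simp only [Lnorm, rpow_two, sq_abs, sqrt_eq_rpow]

theorem Lnorm_four_sq (u : ℝ × ℝ → ℝ) : Lnorm u 4 ^ 2 = √(∫ p in Omg, u p ^ 4) := by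
  have h4 : ∀ p, |u p| ^ (4:ℝ) = u p ^ 4 := fun p => by
    rw [rpow_ofNat, Even.pow_abs (by decide)]
  rw [Lnorm, sqrt_eq_rpow, ← rpow_natCast, ← rpow_mul (integral_nonneg fun _ => by positivity)]
  simp only [h4]
  norm_num

theorem gradNorm_eq_sqrt (f : ℝ × ℝ → ℝ) :
    gradNorm f = √(∫ p in Omg, (px f p ^ 2 + py f p ^ 2)) := by
  simp only [gradNorm, sq_abs, sqrt_eq_rpow]

theorem gradNorm_nonneg (f : ℝ × ℝ → ℝ) : 0 ≤ gradNorm f := by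
  rw [gradNorm_eq_sqrt]
  exact sqrt_nonneg _

theorem Lnorm_px_le_gradNorm {f : ℝ × ℝ → ℝ} (hx : MemLp (px f) 2 (volume.restrict Omg))
    (hy : MemLp (py f) 2 (volume.restrict Omg)) : Lnorm (px f) 2 ≤ gradNorm f := by
  rw [Lnorm_two, gradNorm_eq_sqrt]
  exact sqrt_le_sqrt (integral_mono_of_nonneg (ae_of_all _ fun _ => sq_nonneg _)
    (hx.integrable_sq.add hy.integrable_sq) (ae_of_all _ fun _ => le_add_of_nonneg_right (sq_nonneg _)))

theorem Lnorm_py_le_gradNorm {f : ℝ × ℝ → ℝ} (hx : MemLp (px f) 2 (volume.restrict Omg))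
    (hy : MemLp (py f) 2 (volume.restrict Omg)) : Lnorm (py f) 2 ≤ gradNorm f := by
  rw [Lnorm_two, gradNorm_eq_sqrt]
  exact sqrt_le_sqrt (integral_mono_of_nonneg (ae_of_all _ fun _ => sq_nonneg _)
    (hx.integrable_sq.add hy.integrable_sq) (ae_of_all _ fun _ => le_add_of_nonneg_left (sq_nonneg _)))

theorem abs_integral_mul_le_Lnorm_mul_Lnorm {u v : ℝ × ℝ → ℝ}
    (hu : MemLp u 2 (volume.restrict Omg)) (hv : MemLp v 2 (volume.restrict Omg)) :
    |∫ p in Omg, u p * v p| ≤ Lnorm u 2 * Lnorm v 2 :=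
  calc |∫ p in Omg, u p * v p| ≤ ∫ p in Omg, |u p| * |v p| := by
        simpa only [abs_mul] using abs_integral_le_integral_abs (f := fun p => u p * v p)
    _ ≤ Lnorm u 2 * Lnorm v 2 :=
        integral_mul_le_Lp_mul_Lq_of_nonneg HolderConjugate.two_two
          (ae_of_all _ fun _ => abs_nonneg _) (ae_of_all _ fun _ => abs_nonneg _)
          (by rw [ENNReal.ofReal_ofNat]; exact hu.abs) (by rw [ENNReal.ofReal_ofNat]; exact hv.abs)

theorem integral_mul_le_Lnorm_mul_Lnorm {u v : ℝ × ℝ → ℝ}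
    (hu : MemLp u 2 (volume.restrict Omg)) (hv : MemLp v 2 (volume.restrict Omg)) :
    ∫ p in Omg, u p * v p ≤ Lnorm u 2 * Lnorm v 2 :=
  (le_abs_self _).trans (abs_integral_mul_le_Lnorm_mul_Lnorm hu hv)

theorem integral_mul_add_mul_le {u₁ v₁ u₂ v₂ : ℝ × ℝ → ℝ}
    (hu₁ : MemLp u₁ 2 (volume.restrict Omg)) (hv₁ : MemLp v₁ 2 (volume.restrict Omg))
    (hu₂ : MemLp u₂ 2 (volume.restrict Omg)) (hv₂ : MemLp v₂ 2 (volume.restrict Omg)) :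
    ∫ p in Omg, (u₁ p * v₁ p + u₂ p * v₂ p)
      ≤ Lnorm u₁ 2 * Lnorm v₁ 2 + Lnorm u₂ 2 * Lnorm v₂ 2 := by
  have h₁ : Integrable (fun p => u₁ p * v₁ p) (volume.restrict Omg) := hu₁.integrable_mul hv₁
  have h₂ : Integrable (fun p => u₂ p * v₂ p) (volume.restrict Omg) := hu₂.integrable_mul hv₂
  rw [integral_add h₁ h₂]
  exact add_le_add (integral_mul_le_Lnorm_mul_Lnorm hu₁ hv₁) (integral_mul_le_Lnorm_mul_Lnorm hu₂ hv₂)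

instance : ENNReal.HolderTriple 4 4 2 where
  inv_add_inv_eq_inv := by
    rw [← two_mul, show (4:ℝ≥0∞) = 2 * 2 by norm_num, ENNReal.mul_inv (by simp) (by simp),
      ← mul_assoc, ENNReal.mul_inv_cancel (by simp) (by simp), one_mul]

theorem Lnorm_mul_le {v w : ℝ × ℝ → ℝ} (hv : MemLp v 4 (volume.restrict Omg))
    (hw : MemLp w 4 (volume.restrict Omg)) :
    Lnorm (fun p => v p * w p) 2 ≤ Lnorm v 4 * Lnorm w 4 := by
  have hCS := abs_integral_mul_le_Lnorm_mul_Lnorm (hv.mul' hv) (hw.mul' hw)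
  rw [Lnorm_two, ← sqrt_sq (mul_nonneg (Lnorm_nonneg v 4) (Lnorm_nonneg w 4))]
  refine sqrt_le_sqrt ?_
  calc ∫ p in Omg, (v p * w p) ^ 2 = ∫ p in Omg, (v p * v p) * (w p * w p) := by
        congr 1
        funext p
        ring
    _ ≤ Lnorm (fun p => v p * v p) 2 * Lnorm (fun p => w p * w p) 2 := (le_abs_self _).trans hCS
    _ = (Lnorm v 4 * Lnorm w 4) ^ 2 := by
        rw [mul_pow, Lnorm_four_sq, Lnorm_four_sq, Lnorm_two, Lnorm_two]
        ring_nf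

theorem abs_integral_mul_mul_le {u v w : ℝ × ℝ → ℝ} (hu : MemLp u 2 (volume.restrict Omg))
    (hv : MemLp v 4 (volume.restrict Omg)) (hw : MemLp w 4 (volume.restrict Omg)) :
    |∫ p in Omg, u p * (v p * w p)| ≤ Lnorm u 2 * (Lnorm v 4 * Lnorm w 4) :=
  (abs_integral_mul_le_Lnorm_mul_Lnorm hu (hw.mul' hv)).trans
    (mul_le_mul_of_nonneg_left (Lnorm_mul_le hv hw) (Lnorm_nonneg u 2))

theorem abs_integral_Jac_mul_le {ψ θ : ℝ × ℝ → ℝ}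
    (hψx : MemLp (px ψ) 2 (volume.restrict Omg)) (hψy : MemLp (py ψ) 2 (volume.restrict Omg))
    (hθx : MemLp (px θ) 4 (volume.restrict Omg)) (hθy : MemLp (py θ) 4 (volume.restrict Omg))
    (hθ : MemLp θ 4 (volume.restrict Omg)) :
    |∫ p in Omg, Jac ψ θ p * θ p|
      ≤ gradNorm ψ * ((Lnorm (py θ) 4 + Lnorm (px θ) 4) * Lnorm θ 4) := by
  have hsplit : ∫ p in Omg, Jac ψ θ p * θ p
      = (∫ p in Omg, px ψ p * (py θ p * θ p)) - ∫ p in Omg, py ψ p * (px θ p * θ p) := by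
    have hx : Integrable (fun p => px ψ p * (py θ p * θ p)) (volume.restrict Omg) :=
      hψx.integrable_mul (hθ.mul' (r := 2) hθy)
    have hy : Integrable (fun p => py ψ p * (px θ p * θ p)) (volume.restrict Omg) :=
      hψy.integrable_mul (hθ.mul' (r := 2) hθx)
    rw [← integral_sub hx hy]
    congr 1
    funext p
    simp only [Jac]
    ring
  rw [hsplit]
  calc _ ≤ |∫ p in Omg, px ψ p * (py θ p * θ p)| + |∫ p in Omg, py ψ p * (px θ p * θ p)| :=
        abs_sub _ _
    _ ≤ Lnorm (px ψ) 2 * (Lnorm (py θ) 4 * Lnorm θ 4)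
          + Lnorm (py ψ) 2 * (Lnorm (px θ) 4 * Lnorm θ 4) :=
        add_le_add (abs_integral_mul_mul_le hψx hθy hθ) (abs_integral_mul_mul_le hψy hθx hθ)
    _ ≤ gradNorm ψ * (Lnorm (py θ) 4 * Lnorm θ 4) + gradNorm ψ * (Lnorm (px θ) 4 * Lnorm θ 4) := by
        gcongr
        · exact mul_nonneg (Lnorm_nonneg _ _) (Lnorm_nonneg _ _)
        · exact Lnorm_px_le_gradNorm hψx hψy
        · exact mul_nonneg (Lnorm_nonneg _ _) (Lnorm_nonneg _ _)
        · exact Lnorm_py_le_gradNorm hψx hψy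
    _ = gradNorm ψ * ((Lnorm (py θ) 4 + Lnorm (px θ) 4) * Lnorm θ 4) := by ring

theorem stmt_3_general (ψ θ f₁ f₂ : ℝ × ℝ → ℝ) (Ra L A C : ℝ)
    (hRa : 0 < Ra) (hL : 0 ≤ L) (hA : 0 ≤ A) (hC0 : 0 < C) (hC1 : C ≤ 1)
    (hψ : ContDiffOn ℝ 1 ψ (closure Omg)) (hθ : ContDiffOn ℝ 1 θ (closure Omg))
    (hf₁ : ContinuousOn f₁ (closure Omg)) (hf₂ : ContinuousOn f₂ (closure Omg))
    (hPψ : Lnorm ψ 2 ≤ C * gradNorm ψ) (hPθ : Lnorm θ 2 ≤ C * gradNorm θ)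
    (hθx : Lnorm (px θ) 4 ≤ L) (hθy : Lnorm (py θ) 4 ≤ L)
    (hSob : Lnorm θ 4 ≤ A * gradNorm θ) :
    gradNorm ψ ^ 2 + gradNorm θ ^ 2
      - Ra * (∫ p in Omg, px θ p * ψ p)
      + (∫ p in Omg, Jac ψ θ p * θ p)
      - (∫ p in Omg, (f₁ p * ψ p + f₂ p * θ p))
    ≥ (1 / 2 - C * Ra / 2 - A * L) * gradNorm ψ ^ 2
      + (1 / 2 - Ra / 2 - A * L) * gradNorm θ ^ 2
      - (C ^ 2 / 2) * (Lnorm f₁ 2 ^ 2 + Lnorm f₂ 2 ^ 2) := by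
  have hψ2 := memLp_of_continuousOn_closure_Omg hψ.continuousOn 2
  have hθ2 := memLp_of_continuousOn_closure_Omg hθ.continuousOn 2
  have hf₁2 := memLp_of_continuousOn_closure_Omg hf₁ 2
  have hf₂2 := memLp_of_continuousOn_closure_Omg hf₂ 2
  set a := gradNorm ψ
  set b := gradNorm θ
  have ha : 0 ≤ a := gradNorm_nonneg ψ
  have hb : 0 ≤ b := gradNorm_nonneg θ
  have hbuoyancy : ∫ p in Omg, px θ p * ψ p ≤ b * (C * a) :=
    (integral_mul_le_Lnorm_mul_Lnorm (memLp_px hθ 2) hψ2).trans <|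
      mul_le_mul (Lnorm_px_le_gradNorm (memLp_px hθ 2) (memLp_py hθ 2)) hPψ (Lnorm_nonneg _ _) hb
  have hjacobian : |∫ p in Omg, Jac ψ θ p * θ p| ≤ a * ((L + L) * (A * b)) := by
    refine (abs_integral_Jac_mul_le (memLp_px hψ 2) (memLp_py hψ 2) (memLp_px hθ 4)
      (memLp_py hθ 4) (memLp_of_continuousOn_closure_Omg hθ.continuousOn 4)).trans ?_
    gcongr
    exact Lnorm_nonneg θ 4
  have hforcing : ∫ p in Omg, (f₁ p * ψ p + f₂ p * θ p)
      ≤ Lnorm f₁ 2 * (C * a) + Lnorm f₂ 2 * (C * b) :=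
    (integral_mul_add_mul_le hf₁2 hψ2 hf₂2 hθ2).trans <|
      add_le_add (mul_le_mul_of_nonneg_left hPψ (Lnorm_nonneg _ _))
        (mul_le_mul_of_nonneg_left hPθ (Lnorm_nonneg _ _))
  have hyoung_buoyancy : Ra * (b * (C * a)) ≤ C * Ra / 2 * a ^ 2 + Ra / 2 * b ^ 2 := by
    nlinarith [mul_nonneg (mul_nonneg hRa.le hC0.le) (sq_nonneg (a - b)),
      mul_nonneg hRa.le (mul_nonneg (sub_nonneg.mpr hC1) (sq_nonneg b))]
  have hyoung_jacobian : a * ((L + L) * (A * b)) ≤ A * L * (a ^ 2 + b ^ 2) := by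
    nlinarith [mul_nonneg (mul_nonneg hA hL) (sq_nonneg (a - b))]
  have hyoung_forcing : Lnorm f₁ 2 * (C * a) + Lnorm f₂ 2 * (C * b)
      ≤ C ^ 2 / 2 * (Lnorm f₁ 2 ^ 2 + Lnorm f₂ 2 ^ 2) + (a ^ 2 + b ^ 2) / 2 := by
    nlinarith [sq_nonneg (C * Lnorm f₁ 2 - a), sq_nonneg (C * Lnorm f₂ 2 - b)]
  linarith [neg_abs_le (∫ p in Omg, Jac ψ θ p * θ p), mul_le_mul_of_nonneg_left hbuoyancy hRa.le]

/-- Coercivity estimate for the Galerkin map `F_m` evaluated at `(ψ, θ)`. -/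
theorem stmt_3 (ψ θ f₁ f₂ : ℝ × ℝ → ℝ) (Ra L A C : ℝ)
    (hRa : 0 < Ra) (hL : 0 ≤ L) (hA : 0 ≤ A) (hC0 : 0 < C) (hC1 : C ≤ 1)
    (hψ : ContDiffOn ℝ 1 ψ (closure Omg)) (hθ : ContDiffOn ℝ 1 θ (closure Omg))
    (hψb : ∀ p ∈ frontier Omg, ψ p = 0) (hθb : ∀ p ∈ frontier Omg, θ p = 0)
    (hf₁ : ContinuousOn f₁ (closure Omg)) (hf₂ : ContinuousOn f₂ (closure Omg))
    (hPψ : Lnorm ψ 2 ≤ C * gradNorm ψ) (hPθ : Lnorm θ 2 ≤ C * gradNorm θ)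
    (hθx : Lnorm (px θ) 4 ≤ L) (hθy : Lnorm (py θ) 4 ≤ L)
    (hSob : Lnorm θ 4 ≤ A * gradNorm θ) :
    gradNorm ψ ^ 2 + gradNorm θ ^ 2
      - Ra * (∫ p in Omg, px θ p * ψ p)
      + (∫ p in Omg, Jac ψ θ p * θ p)
      - (∫ p in Omg, (f₁ p * ψ p + f₂ p * θ p))
    ≥ (1 / 2 - C * Ra / 2 - A * L) * gradNorm ψ ^ 2
      + (1 / 2 - Ra / 2 - A * L) * gradNorm θ ^ 2
      - (C ^ 2 / 2) * (Lnorm f₁ 2 ^ 2 + Lnorm f₂ 2 ^ 2) :=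
  stmt_3_general ψ θ f₁ f₂ Ra L A C hRa hL hA hC0 hC1 hψ hθ hf₁ hf₂ hPψ hPθ hθx hθy hSob
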